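/- Let X^(ε) be a perturbed Markov chain on finite state space S, and let C ⊂ S be such that there are no asymptotic dynamical traps with respect to C, i.e., for every y ∈ S there exist M ∈ ℕ and δ > 0 with liminf_{ε→0} P^y_ε(τ_C < M) ≥ δ. Let P̄_ε = (p_ε(x,y))_{x,y ∈ C^c} be the restriction of the transition matrix to C^c. Then limsup_{ε→0} κ(I − P̄_ε) < ∞, where κ denotes the condition number with respect to the supremum norm. -/

import Mathlib

open MeasureTheory Filter Set Topology
open scoped ENNReal

/-- A discrete-time Markov chain: a transition matrix `p` together with the family
of path measures `P x` (chain started at `x`), characterized on cylinder sets. -/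
structure MC (S : Type*) [MeasurableSpace S] where
  p : S → S → ℝ≥0∞
  rowSum : ∀ x, ∑' y, p x y = 1
  P : S → Measure (ℕ → S)
  prob : ∀ x, IsProbabilityMeasure (P x)
  start : ∀ x, P x {ω | ω 0 = x} = 1
  cyl : ∀ (γ : ℕ → S) (n : ℕ),
    P (γ 0) {ω | ∀ i ≤ n + 1, ω i = γ i}
      = P (γ 0) {ω | ∀ i ≤ n, ω i = γ i} * p (γ n) (γ (n + 1))

variable {S : Type*} [MeasurableSpace S]

/-- Return time `τ⁺_A = inf {n > 0 : X_n ∈ A}`, with value `⊤` if the set is never hit. -/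
noncomputable def tauP (A : Set S) (ω : ℕ → S) : ℕ∞ :=
  sInf ((fun k : ℕ => (k : ℕ∞)) '' {k | 0 < k ∧ ω k ∈ A})

/-- Hitting time `τ_A = inf {n ≥ 0 : X_n ∈ A}`. -/
noncomputable def tau (A : Set S) (ω : ℕ → S) : ℕ∞ :=
  sInf ((fun k : ℕ => (k : ℕ∞)) '' {k | ω k ∈ A})

/-- The event `X_{τ⁺_A} = y`. -/
def hitAtP (A : Set S) (y : S) : Set (ℕ → S) :=
  {ω | ∃ k : ℕ, tauP A ω = (k : ℕ∞) ∧ ω k = y}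

/-- The event `X_{τ_A} = y`. -/
def hitAt (A : Set S) (y : S) : Set (ℕ → S) :=
  {ω | ∃ k : ℕ, tau A ω = (k : ℕ∞) ∧ ω k = y}

def MCIrreducible (M : MC S) : Prop := ∀ x y : S, ∃ n : ℕ, 0 < M.P x {ω | ω n = y}

def MCRecurrent (M : MC S) : Prop := ∀ x : S, M.P x {ω | tauP {x} ω ≠ ⊤} = 1

/-- `E^z[τ⁺_x]`, the expected return time to `x` starting from `z`. -/
noncomputable def retExp (M : MC S) (z x : S) : ℝ≥0∞ :=
  ∫⁻ ω, ((tauP {x} ω : ℕ∞) : ℝ≥0∞) ∂ M.P z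

def MCPositiveRecurrent (M : MC S) : Prop := ∀ x : S, retExp M x x < ⊤

def MCStationary (M : MC S) (μ : S → ℝ≥0∞) : Prop :=
  (∑' x, μ x = 1) ∧ ∀ y, ∑' x, μ x * M.p x y = μ y

/-- Asymptotic equivalence of `ℝ≥0∞`-valued functions of `ε` as `ε → 0⁺`:
either both vanish identically on `(0,∞)`, or the second is eventually positive
and the ratio tends to `1`. -/
def AsymEqE (a b : ℝ → ℝ≥0∞) : Prop :=
  ((∀ ε > (0 : ℝ), a ε = 0) ∧ (∀ ε > (0 : ℝ), b ε = 0)) ∨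
  ((∃ ε₀ > (0 : ℝ), ∀ ε : ℝ, 0 < ε → ε < ε₀ → 0 < b ε) ∧
    Tendsto (fun ε => a ε / b ε) (nhdsWithin 0 (Set.Ioi 0)) (nhds 1))

/-- A perturbed Markov chain: transition probabilities converge as `ε → 0⁺`. -/
def Perturbed (X : ℝ → MC S) : Prop :=
  ∀ x y : S, Tendsto (fun ε => (X ε).p x y) (nhdsWithin 0 (Set.Ioi 0)) (nhds ((X 0).p x y))

/-- An irreducibly perturbed Markov chain. -/
def IrreduciblyPerturbed (X : ℝ → MC S) : Prop :=
  Perturbed X ∧ ∀ ε > (0 : ℝ), MCIrreducible (X ε)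

/-- `y` is accessible from `x`. -/
def Accessible (M : MC S) (x y : S) : Prop := ∃ n : ℕ, 0 < M.P x {ω | ω n = y}

/-- `E` is an essential communicating class of `M`. -/
def EssentialClass (M : MC S) (E : Set S) : Prop :=
  ∃ x ∈ E, (∀ y, Accessible M x y → Accessible M y x) ∧
    E = {y | Accessible M x y ∧ Accessible M y x}

/-- `z` is a transient state of `M`. -/
def TransientState (M : MC S) (z : S) : Prop :=
  ∃ y, Accessible M z y ∧ ¬ Accessible M y z

/-- `ν` is the (strictly positive) stationary distribution of the restriction of `M`
to the essential class `E`, trivially extended by `0` outside `E`. -/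
def RestrictedStationary (M : MC S) (E : Set S) (ν : S → ℝ≥0∞) : Prop :=
  (∀ x ∉ E, ν x = 0) ∧ (∀ x ∈ E, 0 < ν x) ∧ (∀ x, ν x < ⊤) ∧
  (∑' x : E, ν x = 1) ∧ ∀ y ∈ E, ∑' x : E, ν x * M.p x y = ν y

/-- The operator norm of a real matrix induced by the supremum norm. -/
noncomputable def supOpNorm {ι : Type*} [Fintype ι] (A : Matrix ι ι ℝ) : ℝ :=
  ⨆ i, ∑ j, |A i j|

/-- The condition number with respect to the supremum norm. -/
noncomputable def condNum {ι : Type*} [Fintype ι] [DecidableEq ι]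
    (A : Matrix ι ι ℝ) : ℝ :=
  supOpNorm A * supOpNorm A⁻¹

/-!
Since `S` is finite, there are `m` and `c > 0` such that, for all small `ε`, the chain started
anywhere outside `C` enters `C` within `m` steps with probability at least `c`. The row sums of
`P̄_ε ^ m` are the probabilities of avoiding `C` for `m` steps, so `‖P̄_ε ^ m‖_∞ ≤ 1 - c`, while
`‖P̄_ε‖_∞ ≤ 1`. Then `(I - P̄_ε)⁻¹ = (∑_{k<m} P̄_εᵏ) (I - P̄_ε ^ m)⁻¹` has norm at most `m / c`,
and `‖I - P̄_ε‖_∞ ≤ 2`.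
-/

theorem MeasurableSpace.preimage_piMap_eq {ι : Type*} {X : ι → Type*}
    [∀ i, MeasurableSpace (X i)] {σ : ∀ i, X i → X i}
    (hσ : ∀ i s, MeasurableSet s → σ i ⁻¹' s = s) {T : Set (∀ i, X i)} (hT : MeasurableSet T) :
    Pi.map σ ⁻¹' T = T := by
  have : Measurable[invariants (Pi.map σ)] (id : (∀ i, X i) → ∀ i, X i) :=
    @measurable_pi_lambda _ _ _ (invariants (Pi.map σ)) _ id fun i => measurable_invariants_dom.2
      ⟨measurable_pi_apply i, fun s hs => congrArg (Function.eval i ⁻¹' ·) (hσ i s hs)⟩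
  exact (this hT).2

theorem exists_ne_forall_mem_of_not_measurableSet_singleton {α : Type*} [MeasurableSpace α]
    [Finite α] {z : α} (hz : ¬MeasurableSet {z}) :
    ∃ z' ≠ z, ∀ s, MeasurableSet s → z ∈ s → z' ∈ s := by
  by_contra! h
  choose s hs hzs hz's using h
  refine hz ?_
  convert MeasurableSet.iInter fun z' => MeasurableSet.iInter fun h : z' ≠ z => hs z' h
  ext w
  simp only [Set.mem_singleton_iff, Set.mem_iInter]
  exact ⟨fun hw z' h => hw ▸ hzs z' h, fun hw => by_contra fun h => hz's w h (hw w h)⟩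

theorem norm_geom_sum_le {R : Type*} [SeminormedRing R] (h1 : ‖(1 : R)‖ ≤ 1) {a : R}
    (ha : ‖a‖ ≤ 1) (m : ℕ) : ‖∑ k ∈ Finset.range m, a ^ k‖ ≤ m := by
  refine (norm_sum_le _ _).trans ?_
  have hpow : ∀ k, ‖a ^ k‖ ≤ 1 := fun
    | 0 => by rwa [pow_zero]
    | k + 1 => (norm_pow_le' a k.succ_pos).trans (pow_le_one₀ (norm_nonneg a) ha)
  simpa using Finset.sum_le_sum fun k (_ : k ∈ Finset.range m) => hpow k

/-- The inverse of `1 - a` factors as `(∑_{k<m} aᵏ) (1 - aᵐ)⁻¹`. -/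
theorem isUnit_one_sub_and_norm_inverse_le {R : Type*} [NormedRing R] [HasSummableGeomSeries R]
    (h1 : ‖(1 : R)‖ ≤ 1) {a : R} (ha : ‖a‖ ≤ 1) {m : ℕ} {r : ℝ} (hr : r < 1)
    (ham : ‖a ^ m‖ ≤ r) :
    IsUnit (1 - a) ∧ ‖Ring.inverse (1 - a)‖ ≤ m / (1 - r) := by
  set s := ∑ k ∈ Finset.range m, a ^ k
  have ham1 : ‖a ^ m‖ < 1 := ham.trans_lt hr
  have hm : IsUnit (1 - a ^ m) := (Units.oneSub _ ham1).isUnit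
  have hcomm : Commute (1 - a) s :=
    (Commute.one_left s).sub_left (Commute.sum_right _ _ _ fun k _ => Commute.self_pow a k)
  have hu : IsUnit (1 - a) := ((hcomm.isUnit_mul_iff).mp (by rwa [mul_neg_geom_sum])).1
  have hinv : Ring.inverse (1 - a) = s * Ring.inverse (1 - a ^ m) := by
    calc Ring.inverse (1 - a) = Ring.inverse (1 - a) * (1 - a ^ m) * Ring.inverse (1 - a ^ m) := by
          rw [mul_assoc, Ring.mul_inverse_cancel _ hm, mul_one]
      _ = s * Ring.inverse (1 - a ^ m) := by
          rw [← mul_neg_geom_sum, ← mul_assoc, Ring.inverse_mul_cancel _ hu, one_mul]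
  have hgeom : ‖Ring.inverse (1 - a ^ m)‖ ≤ (1 - r)⁻¹ := by
    rw [← geom_series_eq_inverse _ ham1]
    refine (tsum_geometric_le_of_norm_lt_one _ ham1).trans ?_
    have : (1 - ‖a ^ m‖)⁻¹ ≤ (1 - r)⁻¹ := by gcongr
    linarith
  refine ⟨hu, ?_⟩
  rw [hinv, div_eq_mul_inv]
  exact (norm_mul_le _ _).trans (mul_le_mul (norm_geom_sum_le h1 ha m) hgeom (norm_nonneg _)
    m.cast_nonneg)

section LinftyOpNorm
attribute [local instance] Matrix.linftyOpNormedAddCommGroup Matrix.linftyOpNormedRing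
variable {ι : Type*} [Fintype ι]

theorem supOpNorm_eq_linfty_opNorm (A : Matrix ι ι ℝ) : supOpNorm A = ‖A‖ := by
  change _ = ‖fun i => WithLp.toLp 1 (A i)‖
  simp only [supOpNorm, ← Real.norm_eq_abs]
  refine le_antisymm (Real.iSup_le (fun i => ?_) (norm_nonneg _))
    ((pi_norm_le_iff_of_nonneg (Real.iSup_nonneg fun i => by positivity)).2 fun i => ?_)
  · simpa only [PiLp.norm_eq_of_L1] using norm_le_pi_norm (fun i => WithLp.toLp 1 (A i)) i
  · rw [PiLp.norm_eq_of_L1]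
    exact le_ciSup (Set.finite_range fun i => ∑ j, ‖A i j‖).bddAbove i

theorem Matrix.linfty_opNorm_le_of_nonneg {A : Matrix ι ι ℝ} (hA : ∀ i j, 0 ≤ A i j) {r : ℝ}
    (hr : 0 ≤ r) (h : ∀ i, ∑ j, A i j ≤ r) : ‖A‖ ≤ r := by
  rw [← supOpNorm_eq_linfty_opNorm]
  refine Real.iSup_le (fun i => ?_) hr
  simpa only [abs_of_nonneg (hA i _)] using h i

theorem Matrix.linfty_opNorm_one_le [DecidableEq ι] : ‖(1 : Matrix ι ι ℝ)‖ ≤ 1 :=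
  linfty_opNorm_le_of_nonneg (fun i j => zero_le_one_elem i j) zero_le_one fun i => by
    simp [one_apply]

theorem condNum_one_sub_le [DecidableEq ι] {A : Matrix ι ι ℝ} (hA0 : ∀ i j, 0 ≤ A i j)
    (hA1 : ∀ i, ∑ j, A i j ≤ 1) {m : ℕ} {r : ℝ} (hr0 : 0 ≤ r) (hr1 : r < 1)
    (hAm : ∀ i, ∑ j, (A ^ m) i j ≤ r) :
    IsUnit (1 - A) ∧ condNum (1 - A) ≤ 2 * (m / (1 - r)) := by
  -- Completeness is only found for the product uniformity, which the norm induces definitionally.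
  have : HasSummableGeomSeries (Matrix ι ι ℝ) :=
    @instHasSummableGeomSeriesOfCompleteSpace _ _ (Matrix.instCompleteSpace ι ι ℝ)
  have hA : ‖A‖ ≤ 1 := Matrix.linfty_opNorm_le_of_nonneg hA0 zero_le_one hA1
  obtain ⟨hu, hinv⟩ := isUnit_one_sub_and_norm_inverse_le Matrix.linfty_opNorm_one_le hA hr1
    (Matrix.linfty_opNorm_le_of_nonneg (Matrix.pow_apply_nonneg hA0 m) hr0 hAm)
  refine ⟨hu, ?_⟩
  rw [condNum, supOpNorm_eq_linfty_opNorm, supOpNorm_eq_linfty_opNorm,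
    Matrix.nonsing_inv_eq_ringInverse]
  have h2 : ‖1 - A‖ ≤ 2 :=
    (norm_sub_le _ _).trans (by linarith [Matrix.linfty_opNorm_one_le (ι := ι)])
  exact mul_le_mul h2 hinv (norm_nonneg _) zero_le_two

end LinftyOpNorm

def pathFrom {α : Type*} (y : α) {n : ℕ} (g : Fin n → α) : ℕ → α
  | 0 => y
  | i + 1 => if h : i < n then g ⟨i, h⟩ else y

theorem pathFrom_succ {α : Type*} (y : α) {n : ℕ} (g : Fin n → α) (j : Fin n) :
    pathFrom y g (j + 1) = g j := by
  simp [pathFrom]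

theorem pathFrom_cons_succ {α : Type*} (y z : α) {n : ℕ} (g : Fin n → α) {i : ℕ} (hi : i ≤ n) :
    pathFrom y (Fin.cons z g) (i + 1) = pathFrom z g i := by
  rcases i with _ | i
  · rfl
  · simp [pathFrom, Nat.lt_of_succ_le hi]
    rfl

theorem tau_lt_coe_iff {α : Type*} (A : Set α) (ω : ℕ → α) (m : ℕ) :
    tau A ω < m ↔ ∃ k < m, ω k ∈ A := by
  simp only [tau, sInf_lt_iff, Set.mem_image, Set.mem_ofPred_eq]
  constructor
  · rintro ⟨_, ⟨k, hk, rfl⟩, hkm⟩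
    exact ⟨k, by exact_mod_cast hkm, hk⟩
  · rintro ⟨k, hkm, hk⟩
    exact ⟨k, ⟨k, hk, rfl⟩, by exact_mod_cast hkm⟩

namespace MC

variable (M : MC S)

theorem p_le_one (x y : S) : M.p x y ≤ 1 :=
  M.rowSum x ▸ ENNReal.le_tsum y

theorem p_ne_top (x y : S) : M.p x y ≠ ⊤ :=
  ne_top_of_le_ne_top ENNReal.one_ne_top (M.p_le_one x y)

theorem sum_p [Fintype S] (x : S) : ∑ y, M.p x y = 1 := by
  rw [← tsum_fintype (L := SummationFilter.unconditional S), M.rowSum]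

noncomputable def pathWeight (n : ℕ) (γ : ℕ → S) : ℝ≥0∞ :=
  ∏ i ∈ Finset.range n, M.p (γ i) (γ (i + 1))

theorem measure_cylinder (γ : ℕ → S) (n : ℕ) :
    M.P (γ 0) {ω | ∀ i ≤ n, ω i = γ i} = M.pathWeight n γ := by
  induction n with
  | zero => simpa [pathWeight] using M.start (γ 0)
  | succ n ih => rw [M.cyl γ n, ih, pathWeight, pathWeight, Finset.prod_range_succ]

theorem measure_step (x w : S) : M.P x {ω | ω 0 = x ∧ ω 1 = w} = M.p x w := by
  simpa [pathWeight, Nat.le_one_iff_eq_zero_or_eq_one, or_imp, forall_and, pathFrom] using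
    M.measure_cylinder (pathFrom x fun _ : Fin 1 => w) 1

theorem pathWeight_pathFrom_cons (y z : S) {n : ℕ} (g : Fin n → S) :
    M.pathWeight (n + 1) (pathFrom y (Fin.cons z g)) = M.p y z * M.pathWeight n (pathFrom z g) := by
  rw [pathWeight, Finset.prod_range_succ', mul_comm, pathWeight]
  congr 1
  refine Finset.prod_congr rfl fun i hi => ?_
  rw [Finset.mem_range] at hi
  rw [pathFrom_cons_succ y z g hi.le, pathFrom_cons_succ y z g hi]

noncomputable def survival (T : Finset S) : ℕ → S → ℝ≥0∞
  | 0, _ => 1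
  | n + 1, y => ∑ z ∈ T, M.p y z * survival T n z

theorem survival_le_one [Fintype S] (T : Finset S) (n : ℕ) (y : S) : M.survival T n y ≤ 1 := by
  induction n generalizing y with
  | zero => exact le_rfl
  | succ n ih =>
    calc M.survival T (n + 1) y ≤ ∑ z ∈ T, M.p y z := by
          simp only [survival]; gcongr with z; exact mul_le_of_le_one_right' (ih z)
      _ ≤ ∑ z, M.p y z := Finset.sum_le_sum_of_subset (Finset.subset_univ T)
      _ = 1 := M.sum_p y

theorem survival_univ [Fintype S] (n : ℕ) (y : S) : M.survival Finset.univ n y = 1 := by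
  induction n generalizing y with
  | zero => rfl
  | succ n ih => simp [survival, ih, M.sum_p]

theorem sum_pathWeight_piFinset [DecidableEq S] (T : Finset S) (n : ℕ) (y : S) :
    ∑ g ∈ Fintype.piFinset fun _ : Fin n => T, M.pathWeight n (pathFrom y g) =
      M.survival T n y := by
  induction n generalizing y with
  | zero => simp [pathWeight, survival]
  | succ n ih =>
    have := Finset.filter_piFinset_eq_map_consEquiv (fun _ : Fin (n + 1) => T) fun _ => True
    simp only [Finset.filter_true] at this
    rw [this, Finset.sum_map, Finset.sum_product]
    refine Finset.sum_congr rfl fun z _ => ?_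
    rw [← ih z, Finset.mul_sum]
    exact Finset.sum_congr rfl fun g _ => M.pathWeight_pathFrom_cons y z g

/-- The cylinders of the paths from `y` that meet `C` within `n` steps cover the hitting event, and
together with those of the paths avoiding `C` they have total weight `1`. -/
theorem measure_tau_lt_add_survival_le_one [Fintype S] [DecidableEq S] (C : Finset S) (n : ℕ)
    {y : S} (hy : MeasurableSet {y}) (hyC : y ∉ C) :
    M.P y {ω | tau (C : Set S) ω < (n + 1 : ℕ)} + M.survival Cᶜ n y ≤ 1 := by
  have := M.prob y
  set avoid := Fintype.piFinset fun _ : Fin n => Cᶜ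
  have hstart : MeasurableSet {ω : ℕ → S | ω 0 = y} :=
    (measurable_pi_apply 0 : Measurable fun ω : ℕ → S => ω 0) hy
  have hnull : M.P y {ω | ω 0 = y}ᶜ = 0 := (prob_compl_eq_zero_iff hstart).2 (M.start y)
  have hcover : {ω | tau (C : Set S) ω < (n + 1 : ℕ)} ⊆
      {ω | ω 0 = y}ᶜ ∪ ⋃ g ∈ Finset.univ \ avoid, {ω | ∀ i ≤ n, ω i = pathFrom y g i} := by
    intro ω hω
    by_cases h0 : ω 0 = y
    · obtain ⟨k, hk, hkC⟩ := (tau_lt_coe_iff _ ω _).1 hω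
      obtain ⟨j, rfl⟩ := Nat.exists_eq_succ_of_ne_zero fun hk0 => hyC (h0 ▸ hk0 ▸ hkC)
      refine Or.inr (Set.mem_biUnion (x := fun j : Fin n => ω (j + 1)) ?_ ?_)
      · simpa [avoid] using ⟨⟨j, by omega⟩, hkC⟩
      · rintro (_ | i) hi
        exacts [h0, (pathFrom_succ y (fun j : Fin n => ω (j + 1)) ⟨i, by omega⟩).symm]
    · exact Or.inl h0
  calc M.P y {ω | tau (C : Set S) ω < (n + 1 : ℕ)} + M.survival Cᶜ n y
      ≤ (0 + ∑ g ∈ Finset.univ \ avoid, M.pathWeight n (pathFrom y g)) + M.survival Cᶜ n y := by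
        gcongr
        refine (measure_mono hcover).trans ((measure_union_le _ _).trans ?_)
        rw [hnull]
        gcongr
        exact (measure_biUnion_finset_le _ _).trans_eq
          (Finset.sum_congr rfl fun g _ => M.measure_cylinder (pathFrom y g) n)
    _ = 1 := by
        rw [zero_add, ← M.sum_pathWeight_piFinset, Finset.sum_sdiff (Finset.subset_univ _),
          ← Fintype.piFinset_univ, M.sum_pathWeight_piFinset, survival_univ]

/-- The step event into `z` lies in the measurable hull of the step event into an inseparable
partner `z'`, so the total mass `1` is exhausted without `M.p x z`. -/
theorem p_eq_zero_of_not_measurableSet_singleton [Fintype S] [DecidableEq S] (x : S) {z : S}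
    (hz : ¬MeasurableSet {z}) : M.p x z = 0 := by
  obtain ⟨z', hne, hzz'⟩ := exists_ne_forall_mem_of_not_measurableSet_singleton hz
  have hσ : ∀ s, MeasurableSet s → Equiv.swap z z' ⁻¹' s = s := by
    intro s hs
    have hiff : z ∈ s ↔ z' ∈ s :=
      ⟨hzz' s hs, fun h => by_contra fun hzs => hzz' sᶜ hs.compl hzs h⟩
    ext w
    rcases eq_or_ne w z with rfl | hwz
    · simpa using hiff.symm
    rcases eq_or_ne w z' with rfl | hwz'
    · simpa using hiff
    · simp [Equiv.swap_apply_of_ne_of_ne hwz hwz']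
  set step := fun w => {ω : ℕ → S | ω 0 = x ∧ ω 1 = w}
  set H := toMeasurable (M.P x) (step z')
  have hHm : MeasurableSet H := measurableSet_toMeasurable _ _
  have hH : step z ∪ step z' ⊆ H := by
    refine Set.union_subset (fun ω hω => ?_) (subset_toMeasurable _ _)
    rw [← MeasurableSpace.preimage_piMap_eq (σ := fun i => if i = 1 then ⇑(Equiv.swap z z') else id)
      (fun i => by split_ifs; exacts [hσ, fun s _ => rfl]) hHm]
    exact subset_toMeasurable _ _ (by simp [step, Pi.map, hω.1, hω.2])
  have hcover : {ω : ℕ → S | ω 0 = x} ⊆ H ∪ ⋃ w ∈ ({z, z'} : Finset S)ᶜ, step w := by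
    intro ω hω
    by_cases hw : ω 1 ∈ ({z, z'} : Finset S)
    · simp only [Finset.mem_insert, Finset.mem_singleton] at hw
      exact Or.inl (hH (hw.imp (⟨hω, ·⟩) (⟨hω, ·⟩)))
    · exact Or.inr (Set.mem_biUnion (Finset.mem_compl.2 hw) ⟨hω, rfl⟩)
  have hmass : 1 ≤ M.p x z' + ∑ w ∈ ({z, z'} : Finset S)ᶜ, M.p x w := by
    calc 1 = M.P x {ω | ω 0 = x} := (M.start x).symm
      _ ≤ M.P x H + ∑ w ∈ ({z, z'} : Finset S)ᶜ, M.P x (step w) :=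
        (measure_mono hcover).trans ((measure_union_le _ _).trans
          (add_le_add le_rfl (measure_biUnion_finset_le _ _)))
      _ = _ := by simp only [H, measure_toMeasurable, step, measure_step]
  have htotal : M.p x z + (M.p x z' + ∑ w ∈ ({z, z'} : Finset S)ᶜ, M.p x w) = 1 := by
    rw [← M.sum_p x, ← Finset.sum_add_sum_compl {z, z'}, Finset.sum_pair hne.symm, add_assoc]
  have : M.p x z + 1 ≤ 0 + 1 := by
    rw [zero_add]; exact (add_le_add le_rfl hmass).trans htotal.le
  exact nonpos_iff_eq_zero.1 ((ENNReal.add_le_add_iff_right ENNReal.one_ne_top).1 this)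

/-- One extra step removes the states with non-measurable singletons, which are never entered. -/
theorem survival_succ_le [Fintype S] [DecidableEq S] (C : Finset S) {n : ℕ} {b : ℝ≥0∞}
    (hb : ∀ y ∉ C, MeasurableSet {y} → M.survival Cᶜ n y ≤ b) (z : S) :
    M.survival Cᶜ (n + 1) z ≤ b := by
  calc M.survival Cᶜ (n + 1) z ≤ ∑ w ∈ Cᶜ, M.p z w * b := by
        refine Finset.sum_le_sum fun w hw => ?_
        by_cases hw' : MeasurableSet {w}
        · gcongr; exact hb w (Finset.mem_compl.1 hw) hw'
        · simp [M.p_eq_zero_of_not_measurableSet_singleton z hw']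
    _ ≤ ∑ w, M.p z w * b := Finset.sum_le_sum_of_subset (Finset.subset_univ _)
    _ = b := by rw [← Finset.sum_mul, M.sum_p, one_mul]

noncomputable def transMatrixOn (T : Finset S) : Matrix T T ℝ :=
  Matrix.of fun w z => (M.p w z).toReal

theorem sum_transMatrixOn_pow_apply [Fintype S] [DecidableEq S] (T : Finset S) (n : ℕ) (w : T) :
    ∑ z, (M.transMatrixOn T ^ n) w z = (M.survival T n w).toReal := by
  induction n generalizing w with
  | zero => simp [Matrix.one_apply, survival]
  | succ n ih =>
    simp only [pow_succ', Matrix.mul_apply]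
    rw [Finset.sum_comm]
    simp only [← Finset.mul_sum, ih]
    simp only [transMatrixOn, Matrix.of_apply, ← ENNReal.toReal_mul]
    rw [Finset.sum_coe_sort T fun z => (M.p w z * M.survival T n z).toReal, ← ENNReal.toReal_sum]
    · rfl
    · exact fun z _ => ENNReal.mul_ne_top (M.p_ne_top _ _) (ne_top_of_le_ne_top ENNReal.one_ne_top
        (M.survival_le_one T n z))

theorem survival_succ_le_one_sub [Fintype S] [DecidableEq S] (C : Finset S) {n : ℕ}
    {c : ℝ≥0∞} (hc : c ≠ ⊤) (h : ∀ y, c ≤ M.P y {ω | tau (C : Set S) ω < (n + 1 : ℕ)}) (z : S) :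
    M.survival Cᶜ (n + 1) z ≤ 1 - c :=
  M.survival_succ_le C (fun y hyC hy => ENNReal.le_sub_of_add_le_left hc <|
    (add_le_add (h y) le_rfl).trans (M.measure_tau_lt_add_survival_le_one C n hy hyC)) z

theorem condNum_one_sub_transMatrixOn_le [Fintype S] [DecidableEq S] (T : Finset S) {n : ℕ}
    {c : ℝ≥0∞} (hc0 : 0 < c) (hc1 : c ≤ 1) (h : ∀ z, M.survival T n z ≤ 1 - c) :
    IsUnit (1 - M.transMatrixOn T) ∧ condNum (1 - M.transMatrixOn T) ≤ 2 * (n / c.toReal) := by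
  have hrow (n : ℕ) (w : T) {b : ℝ≥0∞} (hb : b ≠ ⊤) (h : M.survival T n w ≤ b) :
      ∑ z, (M.transMatrixOn T ^ n) w z ≤ b.toReal :=
    (M.sum_transMatrixOn_pow_apply T n w).trans_le (ENNReal.toReal_mono hb h)
  have hc : (1 - c).toReal = 1 - c.toReal := ENNReal.toReal_sub_of_le hc1 ENNReal.one_ne_top
  have hcpos : 0 < c.toReal :=
    ENNReal.toReal_pos hc0.ne' (ne_top_of_le_ne_top ENNReal.one_ne_top hc1)
  have hA1 (w : T) : ∑ z, M.transMatrixOn T w z ≤ 1 := by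
    simpa only [pow_one, ENNReal.toReal_one] using
      hrow 1 w ENNReal.one_ne_top (M.survival_le_one T 1 w)
  have := condNum_one_sub_le (fun _ _ => ENNReal.toReal_nonneg) hA1 ENNReal.toReal_nonneg
    (by linarith) fun w => hrow n w (by simp) (h w)
  rwa [hc, sub_sub_cancel] at this

end MC

theorem ENNReal.exists_pos_lt_one_forall_lt {ι : Type*} [Fintype ι] {δ : ι → ℝ≥0∞}
    (hδ : ∀ i, 0 < δ i) : ∃ c, 0 < c ∧ c < 1 ∧ ∀ i, c < δ i := by
  obtain ⟨c, hc0, hc⟩ := exists_between (lt_min zero_lt_one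
    ((Finset.lt_inf_iff zero_lt_top).2 fun i _ => hδ i))
  exact ⟨c, hc0, hc.trans_le (min_le_left _ _),
    fun i => hc.trans_le ((min_le_right _ _).trans (Finset.inf_le (Finset.mem_univ i)))⟩

theorem statement19_general [Fintype S] [DecidableEq S] (X : ℝ → MC S)
    (C : Finset S)
    (hnotrap : ∀ y : S, ∃ M : ℕ, ∃ δ : ℝ≥0∞, 0 < δ ∧
      δ ≤ Filter.liminf (fun ε => (X ε).P y {ω | tau (↑C : Set S) ω < (M : ℕ∞)})
            (nhdsWithin 0 (Set.Ioi 0))) :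
    ∃ K : ℝ, ∀ᶠ ε in nhdsWithin (0 : ℝ) (Set.Ioi 0),
      IsUnit (1 - Matrix.of fun w z : {s // s ∈ Cᶜ} => ((X ε).p (w : S) (z : S)).toReal) ∧
      condNum (1 - Matrix.of fun w z : {s // s ∈ Cᶜ} => ((X ε).p (w : S) (z : S)).toReal)
        ≤ K := by
  choose M δ hδ hδle using hnotrap
  obtain ⟨c, hc0, hc1, hcδ⟩ := ENNReal.exists_pos_lt_one_forall_lt hδ
  set N := Finset.univ.sup M
  refine ⟨2 * ((N + 1 : ℕ) / c.toReal), ?_⟩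
  filter_upwards [Filter.eventually_all.2 fun y =>
    Filter.eventually_lt_of_lt_liminf ((hcδ y).trans_le (hδle y))] with ε hε
  have hsurv := (X ε).survival_succ_le_one_sub C hc1.ne_top fun y =>
    (hε y).le.trans (measure_mono fun ω (hω : tau (C : Set S) ω < M y) => hω.trans_le
      (by exact_mod_cast (Finset.le_sup (Finset.mem_univ y)).trans N.le_succ))
  exact (X ε).condNum_one_sub_transMatrixOn_le Cᶜ hc0 hc1.le hsurv

/-- If there are no asymptotic dynamical traps with respect to `C`, then
`limsup_{ε→0} κ(I − P̄_ε) < ∞` for the restriction `P̄_ε` of the transition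
matrix to `Cᶜ` (which is invertible for small `ε`). -/
theorem statement19 [Fintype S] [DecidableEq S] (X : ℝ → MC S) (hX : Perturbed X)
    (C : Finset S)
    (hnotrap : ∀ y : S, ∃ M : ℕ, ∃ δ : ℝ≥0∞, 0 < δ ∧
      δ ≤ Filter.liminf (fun ε => (X ε).P y {ω | tau (↑C : Set S) ω < (M : ℕ∞)})
            (nhdsWithin 0 (Set.Ioi 0))) :
    ∃ K : ℝ, ∀ᶠ ε in nhdsWithin (0 : ℝ) (Set.Ioi 0),
      IsUnit (1 - Matrix.of fun w z : {s // s ∈ Cᶜ} => ((X ε).p (w : S) (z : S)).toReal) ∧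
      condNum (1 - Matrix.of fun w z : {s // s ∈ Cᶜ} => ((X ε).p (w : S) (z : S)).toReal)
        ≤ K :=
  statement19_general X C hnotrap
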